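/- With γ_A = 1/16, γ_B = (13√13−35)/108, δ₁ = 0.0309587, δ₂ = 0.0165525, and η(k) defined by η(0)=1 and η(k) = c₁t₁^k + c₂t₂^k − c₃t₃^k − c₄t₄^k for k ≥ 1 (constants as in the paper), we have for every integer k ≥ 0: η(k) ≤ (2/3)^k (1−δ₁)^{max(k−1,0)} (1−δ₂)^{max(k−2,0)}. -/

import Mathlib

noncomputable def γA : ℝ := 1 / 16
noncomputable def γB : ℝ := (13 * Real.sqrt 13 - 35) / 108

noncomputable def c₁ : ℝ := 8 / (3 - γB) ^ 2
noncomputable def c₂ : ℝ := (1 + γB) ^ 2 / ((1 - γA) * (1 - γB) * (3 - γB) ^ 2)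
noncomputable def c₃ : ℝ := γA * (1 + γB) ^ 2 / ((1 - γA) * (1 - γB) * (3 - γB) ^ 2)
noncomputable def c₄ : ℝ := γB / ((1 - γA) * (1 - γB))
noncomputable def t₁ : ℝ := (2 - γB) / 3
noncomputable def t₂ : ℝ := (4 - 3 * γA - 2 * γB + γA * γB) / 6
noncomputable def t₃ : ℝ := (1 - γB) / 6
noncomputable def t₄ : ℝ := (1 - γA) / 3

noncomputable def η (k : ℕ) : ℝ :=
  if k = 0 then 1 else c₁ * t₁ ^ k + c₂ * t₂ ^ k - c₃ * t₃ ^ k - c₄ * t₄ ^ k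

noncomputable def δ₁ : ℝ := 0.0309587
noncomputable def δ₂ : ℝ := 0.0165525


/-!
For `k ≤ 3` the bound is an exact computation in `ℚ(√13)`: `η 1 = 2/3` identically in `γB`,
and `δ₁`, `δ₂` are `η 2`, `η 3` rounded up. For `k ≥ 4`, dropping the two negative terms gives
`η k ≤ c₁ t₁ ^ k + c₂ t₂ ^ k`; since `t₁, t₂ ≤ (2/3)(1 - δ₁)(1 - δ₂)`, from `k = 4` on this
decays at least as fast as the bound does, and at `k = 4` it is checked numerically.
-/

open Real

theorem sqrt_pow_eq_pow_half_mul {x : ℝ} (hx : 0 ≤ x) (n : ℕ) :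
    √x ^ n = x ^ (n / 2) * if n % 2 = 0 then 1 else √x := by
  conv_lhs => rw [← Nat.div_add_mod n 2, pow_add, pow_mul, sq_sqrt hx]
  rcases Nat.mod_two_eq_zero_or_one n with h | h <;> simp [h]

theorem mul_pow_add_le_pow_mul {a t r : ℝ} (ha : 0 ≤ a) (ht : 0 ≤ t) (htr : t ≤ r) (n m : ℕ) :
    a * t ^ (n + m) ≤ r ^ m * (a * t ^ n) := by
  rw [pow_add, ← mul_assoc, mul_comm (r ^ m)]
  exact mul_le_mul_of_nonneg_left (pow_le_pow_left₀ ht htr m) (by positivity)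

-- `η 2` and `η 3` lie within about `10⁻⁸` of their bounds, hence the precision.
lemma sqrt_thirteen_gt : (3.60555127546398929 : ℝ) < √13 :=
  (lt_sqrt (by norm_num)).2 (by norm_num)

lemma sqrt_thirteen_lt : √13 < (3.6055512754639893 : ℝ) :=
  (sqrt_lt' (by norm_num)).2 (by norm_num)

lemma γB_gt : (0.1099 : ℝ) < γB := by
  unfold γB; linarith [sqrt_thirteen_gt]

lemma γB_lt : γB < (0.11 : ℝ) := by
  unfold γB; linarith [sqrt_thirteen_lt]

noncomputable def commonDenom : ℝ := (1 - γA) * (1 - γB) * (3 - γB) ^ 2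

lemma commonDenom_pos : 0 < commonDenom := by
  have h₁ : 0 < 1 - γB := by linarith [γB_lt]
  have h₃ : 0 < 3 - γB := by linarith [γB_lt]
  unfold commonDenom γA
  positivity

lemma c₁_mul_commonDenom : c₁ * commonDenom = 8 * (1 - γA) * (1 - γB) := by
  have : 3 - γB ≠ 0 := by linarith [γB_lt]
  unfold c₁ commonDenom
  field_simp

lemma c₂_mul_commonDenom : c₂ * commonDenom = (1 + γB) ^ 2 :=
  div_mul_cancel₀ _ commonDenom_pos.ne'

lemma c₃_mul_commonDenom : c₃ * commonDenom = γA * (1 + γB) ^ 2 :=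
  div_mul_cancel₀ _ commonDenom_pos.ne'

lemma c₄_mul_commonDenom : c₄ * commonDenom = γB * (3 - γB) ^ 2 := by
  have : 1 - γB ≠ 0 := by linarith [γB_lt]
  have : (1 : ℝ) - γA ≠ 0 := by norm_num [γA]
  unfold c₄ commonDenom
  field_simp

lemma η_mul_commonDenom {k : ℕ} (hk : k ≠ 0) :
    η k * commonDenom = 8 * (1 - γA) * (1 - γB) * t₁ ^ k + (1 + γB) ^ 2 * t₂ ^ k
      - γA * (1 + γB) ^ 2 * t₃ ^ k - γB * (3 - γB) ^ 2 * t₄ ^ k := by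
  rw [η, if_neg hk]
  linear_combination t₁ ^ k * c₁_mul_commonDenom + t₂ ^ k * c₂_mul_commonDenom
    - t₃ ^ k * c₃_mul_commonDenom - t₄ ^ k * c₄_mul_commonDenom

lemma η_one : η 1 = 2 / 3 := by
  rw [← mul_left_inj' commonDenom_pos.ne', η_mul_commonDenom one_ne_zero]
  simp only [commonDenom, t₁, t₂, t₃, t₄, γA]
  ring

lemma η_two_le : η 2 ≤ (2 / 3) ^ 2 * (1 - δ₁) := by
  rw [← mul_le_mul_iff_left₀ commonDenom_pos, η_mul_commonDenom two_ne_zero]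
  simp only [commonDenom, t₁, t₂, t₃, t₄, γA, γB, δ₁]
  ring_nf
  simp only [sqrt_pow_eq_pow_half_mul (show (0 : ℝ) ≤ 13 by norm_num)]
  norm_num
  linarith [sqrt_thirteen_gt, sqrt_thirteen_lt]

lemma η_three_le : η 3 ≤ (2 / 3) ^ 3 * (1 - δ₁) ^ 2 * (1 - δ₂) := by
  rw [← mul_le_mul_iff_left₀ commonDenom_pos, η_mul_commonDenom three_ne_zero]
  simp only [commonDenom, t₁, t₂, t₃, t₄, γA, γB, δ₁, δ₂]
  ring_nf
  simp only [sqrt_pow_eq_pow_half_mul (show (0 : ℝ) ≤ 13 by norm_num)]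
  norm_num
  linarith [sqrt_thirteen_gt, sqrt_thirteen_lt]

lemma c₁_nonneg : 0 ≤ c₁ := by unfold c₁; positivity

lemma c₂_nonneg : 0 ≤ c₂ := div_nonneg (sq_nonneg _) commonDenom_pos.le

lemma c₃_nonneg : 0 ≤ c₃ := div_nonneg (by norm_num [γA]; positivity) commonDenom_pos.le

lemma c₄_nonneg : 0 ≤ c₄ :=
  div_nonneg (by linarith [γB_gt]) (by norm_num [γA]; linarith [γB_lt])

lemma t₁_nonneg : 0 ≤ t₁ := by unfold t₁; linarith [γB_lt]

lemma t₂_nonneg : 0 ≤ t₂ := by unfold t₂ γA; linarith [γB_lt]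

lemma t₃_nonneg : 0 ≤ t₃ := by unfold t₃; linarith [γB_lt]

lemma t₄_nonneg : 0 ≤ t₄ := by norm_num [t₄, γA]

lemma η_le_dominant {k : ℕ} (hk : k ≠ 0) : η k ≤ c₁ * t₁ ^ k + c₂ * t₂ ^ k := by
  have h₃ : 0 ≤ c₃ * t₃ ^ k := mul_nonneg c₃_nonneg (pow_nonneg t₃_nonneg k)
  have h₄ : 0 ≤ c₄ * t₄ ^ k := mul_nonneg c₄_nonneg (pow_nonneg t₄_nonneg k)
  rw [η, if_neg hk]
  linarith

lemma dominant_four_le :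
    c₁ * t₁ ^ 4 + c₂ * t₂ ^ 4 ≤ (2 / 3) ^ 4 * (1 - δ₁) ^ 3 * (1 - δ₂) ^ 2 := by
  rw [← mul_le_mul_iff_left₀ commonDenom_pos, add_mul, mul_right_comm c₁, c₁_mul_commonDenom,
    mul_right_comm c₂, c₂_mul_commonDenom]
  simp only [commonDenom, t₁, t₂, γA, γB, δ₁, δ₂]
  ring_nf
  simp only [sqrt_pow_eq_pow_half_mul (show (0 : ℝ) ≤ 13 by norm_num)]
  norm_num
  linarith [sqrt_thirteen_gt, sqrt_thirteen_lt]

noncomputable def decayRatio : ℝ := 2 / 3 * (1 - δ₁) * (1 - δ₂)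

lemma decayRatio_nonneg : 0 ≤ decayRatio := by norm_num [decayRatio, δ₁, δ₂]

lemma t₁_le_decayRatio : t₁ ≤ decayRatio := by
  unfold t₁ decayRatio δ₁ δ₂; linarith [γB_gt]

lemma t₂_le_decayRatio : t₂ ≤ decayRatio := by
  unfold t₂ decayRatio γA δ₁ δ₂; linarith [γB_gt]

theorem stmt_11 (k : ℕ) :
    η k ≤ (2 / 3 : ℝ) ^ k * (1 - δ₁) ^ (k - 1) * (1 - δ₂) ^ (k - 2) := by
  match k with
  | 0 => simp [η]
  | 1 => simp [η_one]
  | 2 => simpa using η_two_le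
  | 3 => simpa using η_three_le
  | m + 4 =>
    calc η (m + 4) ≤ c₁ * t₁ ^ (4 + m) + c₂ * t₂ ^ (4 + m) := by
          rw [add_comm 4]; exact η_le_dominant (by omega)
      _ ≤ decayRatio ^ m * (c₁ * t₁ ^ 4) + decayRatio ^ m * (c₂ * t₂ ^ 4) :=
          add_le_add (mul_pow_add_le_pow_mul c₁_nonneg t₁_nonneg t₁_le_decayRatio 4 m)
            (mul_pow_add_le_pow_mul c₂_nonneg t₂_nonneg t₂_le_decayRatio 4 m)
      _ ≤ decayRatio ^ m * ((2 / 3) ^ 4 * (1 - δ₁) ^ 3 * (1 - δ₂) ^ 2) := by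
          rw [← mul_add]
          exact mul_le_mul_of_nonneg_left dominant_four_le (pow_nonneg decayRatio_nonneg m)
      _ = (2 / 3) ^ (m + 4) * (1 - δ₁) ^ (m + 4 - 1) * (1 - δ₂) ^ (m + 4 - 2) := by
          rw [show m + 4 - 1 = m + 3 by omega, show m + 4 - 2 = m + 2 by omega, decayRatio,
            mul_pow, mul_pow]
          ring
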